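/- arXiv:1205.4349 — 8 statements merged into one kernel-verified Lean document; each statement's English description precedes it below -/
import Mathlib

section
/- For any finite instance space X, any concept class F of Boolean functions on X, and any f ∈ F, TD_F(f) + C¹_F(f) ≥ |X|. -/
variable {X : Type*} [Fintype X] [DecidableEq X]

/-- `f` and `g` agree on all points of `S`. -/
def AgreeOn (f g : X → Bool) (S : Finset X) : Prop := ∀ x ∈ S, f x = g x

/-- `S` is a teaching set for `f` w.r.t. `F`: `f` is the unique member of `F`
consistent with `f` on `S`. -/
def IsTeachingSet (F : Finset (X → Bool)) (f : X → Bool) (S : Finset X) : Prop :=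
  ∀ g ∈ F, AgreeOn f g S → g = f

/-- Teaching dimension of `f` w.r.t. `F`: minimum size of a teaching set. -/
noncomputable def TD (F : Finset (X → Bool)) (f : X → Bool) : ℕ :=
  sInf {n | ∃ S : Finset X, IsTeachingSet F f S ∧ S.card = n}

/-- `S` is a 1-certificate for `f` w.r.t. `F`: every function agreeing with `f` on `S`
belongs to `F`. -/
def IsOneCert (F : Finset (X → Bool)) (f : X → Bool) (S : Finset X) : Prop :=
  ∀ g : X → Bool, AgreeOn f g S → g ∈ F

/-- 1-certificate complexity of `f` w.r.t. `F`. -/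
noncomputable def C1 (F : Finset (X → Bool)) (f : X → Bool) : ℕ :=
  sInf {n | ∃ S : Finset X, IsOneCert F f S ∧ S.card = n}

/-- `S` is a 0-certificate for `f` w.r.t. `F`: no member of `F` agrees with `f` on `S`. -/
def IsZeroCert (F : Finset (X → Bool)) (f : X → Bool) (S : Finset X) : Prop :=
  ∀ g ∈ F, ¬ AgreeOn f g S

/-- 0-certificate complexity of `f` w.r.t. `F`. -/
noncomputable def C0 (F : Finset (X → Bool)) (f : X → Bool) : ℕ :=
  sInf {n | ∃ S : Finset X, IsZeroCert F f S ∧ S.card = n}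

/-- for any f ∈ F, TD_F(f) + C¹_F(f) ≥ |X|. -/
theorem card_le_td_add_c1 (F : Finset (X → Bool)) (f : X → Bool) (hf : f ∈ F) :
    Fintype.card X ≤ TD F f + C1 F f := by
  have hTne : {n | ∃ S : Finset X, IsTeachingSet F f S ∧ S.card = n}.Nonempty :=
    ⟨(Finset.univ : Finset X).card, Finset.univ,
      fun g _ hag => funext fun x => (hag x (Finset.mem_univ x)).symm, rfl⟩
  have hCne : {n | ∃ S : Finset X, IsOneCert F f S ∧ S.card = n}.Nonempty :=
    ⟨(Finset.univ : Finset X).card, Finset.univ,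
      fun g hag => by
        have : g = f := funext fun x => (hag x (Finset.mem_univ x)).symm
        rwa [this], rfl⟩
  obtain ⟨S, hS, hScard⟩ := Nat.sInf_mem hTne
  obtain ⟨T, hT, hTcard⟩ := Nat.sInf_mem hCne
  have hun : S ∪ T = Finset.univ := by
    by_contra h
    obtain ⟨x, hx⟩ : ∃ x, x ∉ S ∪ T := by
      by_contra hc
      push_neg at hc
      exact h (Finset.eq_univ_iff_forall.2 hc)
    have hxS : x ∉ S := fun hxs => hx (Finset.mem_union_left _ hxs)
    have hxT : x ∉ T := fun hxt => hx (Finset.mem_union_right _ hxt)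
    set g : X → Bool := Function.update f x (!f x) with hg
    have hagT : AgreeOn f g T := fun y hy => by
      have : y ≠ x := fun e => hxT (e ▸ hy)
      simp [hg, Function.update_of_ne this]
    have hagS : AgreeOn f g S := fun y hy => by
      have : y ≠ x := fun e => hxS (e ▸ hy)
      simp [hg, Function.update_of_ne this]
    have hgF : g ∈ F := hT g hagT
    have : g = f := hS g hgF hagS
    have : g x = f x := by rw [this]
    simp [hg] at this
  calc Fintype.card X = (Finset.univ : Finset X).card := (Finset.card_univ).symm
    _ = (S ∪ T).card := by rw [hun]
    _ ≤ S.card + T.card := Finset.card_union_le _ _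
    _ = TD F f + C1 F f := by rw [hScard, hTcard]; rfl
end

section
/- If S is a 1-certificate for f ∈ F with respect to F and T is a teaching set for f with respect to F, then S ∪ T = X (i.e., the union of any 1-certificate and any teaching set of the same function covers the whole instance space). -/
variable {X : Type*} [Fintype X] [DecidableEq X]

/-- the union of any 1-certificate and any teaching set of f ∈ F
covers the whole instance space. -/
theorem oneCert_union_teachingSet_eq_univ (F : Finset (X → Bool)) (f : X → Bool)
    (hf : f ∈ F) (S T : Finset X) (hS : IsOneCert F f S) (hT : IsTeachingSet F f T) :
    S ∪ T = Finset.univ := by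
  ext x
  simp only [Finset.mem_univ, iff_true, Finset.mem_union]
  by_contra hx
  push_neg at hx
  obtain ⟨hxS, hxT⟩ := hx
  set g : X → Bool := fun y => if y = x then ! f x else f y with hg
  have hagS : AgreeOn f g S := fun y hy => by
    have hne : y ≠ x := fun h => hxS (h ▸ hy)
    simp [hg, hne]
  have hgF : g ∈ F := hS g hagS
  have hagT : AgreeOn f g T := fun y hy => by
    have hne : y ≠ x := fun h => hxT (h ▸ hy)
    simp [hg, hne]
  have := hT g hgF hagT
  have : g x = f x := by rw [this]
  simp [hg] at this
end

section
/- For any finite X and any nonempty concept class F on X, TD(F) + C¹(F) ≥ |X|, where TD(F) = max over f ∈ F of TD_F(f) and C¹(F) = max over f ∈ F of C¹_F(f). -/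
variable {X : Type*} [Fintype X] [DecidableEq X]

/-- TD(F) + C¹(F) ≥ |X| for nonempty F, with worst-case measures. -/
theorem card_le_tdClass_add_c1Class (F : Finset (X → Bool)) (hF : F.Nonempty) :
    Fintype.card X ≤ F.sup (TD F) + F.sup (C1 F) := by
  obtain ⟨f, hf⟩ := hF
  -- univ is both a teaching set and a 1-certificate
  have hTne : ∃ n, n ∈ {n | ∃ S : Finset X, IsTeachingSet F f S ∧ S.card = n} :=
    ⟨(Finset.univ : Finset X).card, Finset.univ, fun g _ h => funext fun x => (h x (Finset.mem_univ x)).symm, rfl⟩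
  have hCne : ∃ n, n ∈ {n | ∃ S : Finset X, IsOneCert F f S ∧ S.card = n} :=
    ⟨(Finset.univ : Finset X).card, Finset.univ,
      fun g h => by
        have : g = f := funext fun x => (h x (Finset.mem_univ x)).symm
        rwa [this], rfl⟩
  obtain ⟨T, hT, hTcard⟩ := Nat.sInf_mem hTne
  obtain ⟨S, hS, hScard⟩ := Nat.sInf_mem hCne
  have hunion : S ∪ T = Finset.univ := by
    by_contra h
    obtain ⟨x, hx⟩ : ∃ x, x ∉ S ∪ T := by
      by_contra h'
      push_neg at h'
      exact h (Finset.eq_univ_of_forall h')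
    rw [Finset.mem_union] at hx
    push_neg at hx
    set g := Function.update f x (!f x) with hg
    have hag : ∀ y, y ≠ x → f y = g y := fun y hy => by
      simp [hg, Function.update_of_ne hy]
    have hgF : g ∈ F := hS g (fun y hyS => hag y (fun h => hx.1 (h ▸ hyS)))
    have hgf : g = f := hT g hgF (fun y hyT => hag y (fun h => hx.2 (h ▸ hyT)))
    have : g x = f x := by rw [hgf]
    simp [hg] at this
  calc Fintype.card X = (S ∪ T).card := by rw [hunion, Finset.card_univ]
    _ ≤ T.card + S.card := by rw [Finset.union_comm]; exact Finset.card_union_le T S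
    _ = TD F f + C1 F f := by rw [hTcard, hScard]; rfl
    _ ≤ F.sup (TD F) + F.sup (C1 F) := Nat.add_le_add (Finset.le_sup hf) (Finset.le_sup hf)
end

section
/- For any finite X and any nonempty concept class F on X, the average teaching dimension plus the average 1-certificate complexity is at least |X|: (Σ_{f∈F} TD_F(f))/|F| + (Σ_{f∈F} C¹_F(f))/|F| ≥ |X|. -/
variable {X : Type*} [Fintype X] [DecidableEq X]

section

variable {α : Type*} {F : Finset (α → Bool)} {f : α → Bool} {S T : Finset α}

theorem agreeOn_update_of_notMem [DecidableEq α] {x : α} (hx : x ∉ S) (b : Bool) :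
    AgreeOn f (Function.update f x b) S := fun _ hy =>
  (Function.update_of_ne (ne_of_mem_of_not_mem hy hx) b f).symm

theorem isTeachingSet_univ [Fintype α] (F : Finset (α → Bool)) (f : α → Bool) :
    IsTeachingSet F f Finset.univ := fun _ _ hg =>
  funext fun x => (hg x (Finset.mem_univ x)).symm

theorem isOneCert_univ [Fintype α] (hf : f ∈ F) : IsOneCert F f Finset.univ := fun g hg => by
  rwa [← funext fun x => hg x (Finset.mem_univ x)]

theorem exists_isTeachingSet_card_eq_TD [Fintype α] (F : Finset (α → Bool)) (f : α → Bool) :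
    ∃ S, IsTeachingSet F f S ∧ S.card = TD F f :=
  Nat.sInf_mem (s := {n | ∃ S, IsTeachingSet F f S ∧ S.card = n})
    ⟨_, Finset.univ, isTeachingSet_univ F f, rfl⟩

theorem exists_isOneCert_card_eq_C1 [Fintype α] (hf : f ∈ F) :
    ∃ S, IsOneCert F f S ∧ S.card = C1 F f :=
  Nat.sInf_mem (s := {n | ∃ S, IsOneCert F f S ∧ S.card = n})
    ⟨_, Finset.univ, isOneCert_univ hf, rfl⟩

/-- Flipping `f` at a point outside `S ∪ T` gives a member of `F` (by `T`) that `S` cannot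
tell apart from `f`. -/
theorem IsTeachingSet.mem_or_mem_of_isOneCert [DecidableEq α] (hS : IsTeachingSet F f S)
    (hT : IsOneCert F f T) (x : α) : x ∈ S ∨ x ∈ T := by
  by_contra! hx
  have hflip := hS _ (hT _ (agreeOn_update_of_notMem hx.2 (!f x)))
    (agreeOn_update_of_notMem hx.1 (!f x))
  simpa using congrFun hflip x

theorem card_le_TD_add_C1 [Fintype α] [DecidableEq α] (hf : f ∈ F) :
    Fintype.card α ≤ TD F f + C1 F f := by
  obtain ⟨S, hS, hS_card⟩ := exists_isTeachingSet_card_eq_TD F f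
  obtain ⟨T, hT, hT_card⟩ := exists_isOneCert_card_eq_C1 hf
  rw [← hS_card, ← hT_card]
  have hcover : S ∪ T = Finset.univ :=
    Finset.eq_univ_of_forall fun x => Finset.mem_union.2 (hS.mem_or_mem_of_isOneCert hT x)
  calc Fintype.card α = (S ∪ T).card := by rw [hcover, Finset.card_univ]
    _ ≤ S.card + T.card := Finset.card_union_le S T

end

/-- aTD(F) + aC¹(F) ≥ |X| for nonempty F. -/
theorem card_le_aTD_add_aC1 (F : Finset (X → Bool)) (hF : F.Nonempty) :
    (Fintype.card X : ℚ) ≤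
      (∑ f ∈ F, (TD F f : ℚ)) / F.card + (∑ f ∈ F, (C1 F f : ℚ)) / F.card := by
  have hcard : (0 : ℚ) < F.card := by exact_mod_cast hF.card_pos
  rw [← add_div, le_div_iff₀ hcard, ← Finset.sum_add_distrib, mul_comm, ← nsmul_eq_mul]
  exact Finset.card_nsmul_le_sum F _ _ fun f hf => by exact_mod_cast card_le_TD_add_C1 hf
end

section
/- Bondy's theorem: For any finite set X and any family F of functions X → Bool with |F| ≤ |X|, there exists a subset S ⊆ X with |S| ≤ |F| − 1 such that distinct functions in F differ on S (i.e., the restriction map F → (S → Bool) is injective). -/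
variable {X : Type*} [Fintype X] [DecidableEq X]

theorem bondy_aux (n : ℕ) : ∀ F : Finset (X → Bool), F.card = n → F.Nonempty →
    ∃ S : Finset X, S.card ≤ F.card - 1 ∧
      ∀ f ∈ F, ∀ g ∈ F, AgreeOn f g S → f = g := by
  induction n using Nat.strong_induction_on with
  | _ n ih =>
    intro F hcard hne
    by_cases h1 : F.card ≤ 1
    · exact ⟨∅, by simp, fun f hf g hg _ => Finset.card_le_one.mp h1 f hf g hg⟩
    · push_neg at h1
      obtain ⟨f, hf, g, hg, hfg⟩ := Finset.one_lt_card.mp h1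
      have : ∃ x, f x ≠ g x := by
        by_contra hc; push_neg at hc; exact hfg (funext hc)
      obtain ⟨x, hx⟩ := this
      set F0 := F.filter (fun h => h x = false) with hF0
      set F1 := F.filter (fun h => ¬ (h x = false)) with hF1
      have hsum : F0.card + F1.card = F.card := Finset.card_filter_add_card_filter_not _
      have h0ne : F0.Nonempty := by
        cases h : f x with
        | false => exact ⟨f, Finset.mem_filter.mpr ⟨hf, h⟩⟩
        | true => exact ⟨g, Finset.mem_filter.mpr ⟨hg, by cases hg' : g x <;> simp_all⟩⟩
      have h1ne : F1.Nonempty := by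
        cases h : f x with
        | false => exact ⟨g, Finset.mem_filter.mpr ⟨hg, by cases hg' : g x <;> simp_all⟩⟩
        | true => exact ⟨f, Finset.mem_filter.mpr ⟨hf, by simp [h]⟩⟩
      have hc0 : F0.card < n := by
        have := Finset.card_pos.mpr h1ne; omega
      have hc1 : F1.card < n := by
        have := Finset.card_pos.mpr h0ne; omega
      obtain ⟨S0, hS0c, hS0⟩ := ih F0.card hc0 F0 rfl h0ne
      obtain ⟨S1, hS1c, hS1⟩ := ih F1.card hc1 F1 rfl h1ne
      refine ⟨insert x (S0 ∪ S1), ?_, ?_⟩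
      · have hb : (insert x (S0 ∪ S1)).card ≤ 1 + (S0.card + S1.card) := by
          calc (insert x (S0 ∪ S1)).card ≤ (S0 ∪ S1).card + 1 := Finset.card_insert_le _ _
            _ ≤ S0.card + S1.card + 1 := by
                have := Finset.card_union_le S0 S1; omega
            _ = 1 + (S0.card + S1.card) := by omega
        have p0 := Finset.card_pos.mpr h0ne
        have p1 := Finset.card_pos.mpr h1ne
        omega
      · intro f' hf' g' hg' hag
        have hxmem : x ∈ insert x (S0 ∪ S1) := Finset.mem_insert_self _ _
        have hagx : f' x = g' x := hag x hxmem
        cases h : f' x with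
        | false =>
          have hf0 : f' ∈ F0 := Finset.mem_filter.mpr ⟨hf', h⟩
          have hg0 : g' ∈ F0 := Finset.mem_filter.mpr ⟨hg', by rw [← hagx]; exact h⟩
          exact hS0 f' hf0 g' hg0 (fun y hy => hag y (Finset.mem_insert_of_mem (Finset.mem_union_left _ hy)))
        | true =>
          have hf1 : f' ∈ F1 := Finset.mem_filter.mpr ⟨hf', by simp [h]⟩
          have hg1 : g' ∈ F1 := Finset.mem_filter.mpr ⟨hg', by rw [← hagx]; simp [h]⟩
          exact hS1 f' hf1 g' hg1 (fun y hy => hag y (Finset.mem_insert_of_mem (Finset.mem_union_right _ hy)))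

/-- Bondy's theorem: if F is a nonempty family with |F| ≤ |X|, there is
S ⊆ X with |S| ≤ |F| - 1 on which distinct members of F differ. -/
theorem bondy (F : Finset (X → Bool)) (hne : F.Nonempty) (h : F.card ≤ Fintype.card X) :
    ∃ S : Finset X, S.card ≤ F.card - 1 ∧
      ∀ f ∈ F, ∀ g ∈ F, AgreeOn f g S → f = g :=
  bondy_aux F.card F rfl hne
end

section
/- For any Boolean function F and any input x, the block sensitivity of F at x is at most the certificate complexity of F at x: BS_F(x) ≤ C_F(x). -/
variable {X : Type*} [Fintype X] [DecidableEq X]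

/-- Flip the bits of x indexed by B. -/
def flipOn {I : Type*} [DecidableEq I] (x : I → Bool) (B : Finset I) : I → Bool :=
  fun i => if i ∈ B then !(x i) else x i

/-- F is sensitive at x to the block B. -/
def SensitiveBlock {I : Type*} [DecidableEq I] (F : (I → Bool) → Bool)
    (x : I → Bool) (B : Finset I) : Prop :=
  F (flipOn x B) ≠ F x

/-- Block sensitivity of F at x: the largest number of pairwise disjoint blocks
to each of which F is sensitive at x. -/
noncomputable def BS {I : Type*} [Fintype I] [DecidableEq I]
    (F : (I → Bool) → Bool) (x : I → Bool) : ℕ :=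
  sSup {n | ∃ blocks : Finset (Finset I), blocks.card = n ∧
    (∀ B ∈ blocks, SensitiveBlock F x B) ∧
    (blocks : Set (Finset I)).Pairwise (fun A B => Disjoint A B)}

/-- S is a certificate for F at x. -/
def IsCert {I : Type*} (F : (I → Bool) → Bool) (x : I → Bool) (S : Finset I) : Prop :=
  ∀ y : I → Bool, (∀ i ∈ S, y i = x i) → F y = F x

/-- Certificate complexity of F at x. -/
noncomputable def Cx {I : Type*} (F : (I → Bool) → Bool) (x : I → Bool) : ℕ :=
  sInf {n | ∃ S : Finset I, IsCert F x S ∧ S.card = n}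

/-- BS_F(x) ≤ C_F(x). -/
theorem bs_le_cert {I : Type*} [Fintype I] [DecidableEq I]
    (F : (I → Bool) → Bool) (x : I → Bool) :
    BS F x ≤ Cx F x := by
  have hne : {n | ∃ S : Finset I, IsCert F x S ∧ S.card = n}.Nonempty := by
    refine ⟨Finset.univ.card, Finset.univ, ?_, rfl⟩
    intro y hy
    have : y = x := funext fun i => hy i (Finset.mem_univ i)
    rw [this]
  obtain ⟨S, hS, hScard⟩ := Nat.sInf_mem hne
  have key : ∀ n ∈ {n | ∃ blocks : Finset (Finset I), blocks.card = n ∧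
      (∀ B ∈ blocks, SensitiveBlock F x B) ∧
      (blocks : Set (Finset I)).Pairwise (fun A B => Disjoint A B)}, n ≤ S.card := by
    rintro n ⟨blocks, hcard, hsens, hdisj⟩
    have hinter : ∀ B ∈ blocks, (B ∩ S).Nonempty := by
      intro B hB
      by_contra h
      rw [Finset.not_nonempty_iff_eq_empty] at h
      have hdis : ∀ i ∈ S, i ∉ B := by
        intro i hi hiB
        exact (Finset.eq_empty_iff_forall_notMem.mp h i) (Finset.mem_inter.mpr ⟨hiB, hi⟩)
      exact hsens B hB (hS _ (fun i hi => by simp [flipOn, hdis i hi]))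
    have hdisj' : ∀ A ∈ blocks, ∀ B ∈ blocks, A ≠ B →
        Disjoint (A ∩ S) (B ∩ S) := fun A hA B hB hAB =>
      (hdisj hA hB hAB).mono Finset.inter_subset_left Finset.inter_subset_left
    calc n = ∑ _B ∈ blocks, 1 := by simp [hcard]
      _ ≤ ∑ B ∈ blocks, (B ∩ S).card :=
          Finset.sum_le_sum fun B hB => (hinter B hB).card_pos
      _ = (blocks.biUnion (· ∩ S)).card := (Finset.card_biUnion hdisj').symm
      _ ≤ S.card := Finset.card_le_card
          (Finset.biUnion_subset.mpr fun B _ => Finset.inter_subset_right)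
  have hbsne : {n | ∃ blocks : Finset (Finset I), blocks.card = n ∧
      (∀ B ∈ blocks, SensitiveBlock F x B) ∧
      (blocks : Set (Finset I)).Pairwise (fun A B => Disjoint A B)}.Nonempty :=
    ⟨0, ∅, by simp, by simp, by simp⟩
  calc BS F x ≤ S.card := csSup_le hbsne key
    _ = Cx F x := hScard
end

section
/- For any concept class F on a finite set X: TD(F) ≤ ETD(F) and C⁰(F) ≤ ETD(F) + 1, and conversely ETD(F) ≤ max{TD(F), C⁰(F)} + 1. -/
variable {X : Type*} [Fintype X] [DecidableEq X]

/-- S is a specifying set for g w.r.t. F: at most one member of F agrees with g on S. -/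
def IsSpecSet (F : Finset (X → Bool)) (g : X → Bool) (S : Finset X) : Prop :=
  ∀ f₁ ∈ F, ∀ f₂ ∈ F, AgreeOn g f₁ S → AgreeOn g f₂ S → f₁ = f₂

/-- Extended teaching dimension: minimal k such that every function has a
specifying set of size at most k. -/
noncomputable def ETD (F : Finset (X → Bool)) : ℕ :=
  sInf {k | ∀ g : X → Bool, ∃ S : Finset X, IsSpecSet F g S ∧ S.card ≤ k}

/-- Worst-case teaching dimension of the class. -/
noncomputable def TDc (F : Finset (X → Bool)) : ℕ := F.sup (TD F)

/-- Worst-case 0-certificate complexity over non-members (0 if F is everything). -/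
noncomputable def C0c (F : Finset (X → Bool)) : ℕ :=
  (Finset.univ.filter (fun g : X → Bool => g ∉ F)).sup (C0 F)

/-- TD(F) ≤ ETD(F), C⁰(F) ≤ ETD(F) + 1, and
ETD(F) ≤ max {TD(F), C⁰(F)} + 1. -/
theorem etd_bounds (F : Finset (X → Bool)) (hF : F.Nonempty) :
    TDc F ≤ ETD F ∧ C0c F ≤ ETD F + 1 ∧ ETD F ≤ max (TDc F) (C0c F) + 1 := by
  classical
  have hKne : {k | ∀ g : X → Bool, ∃ S : Finset X, IsSpecSet F g S ∧ S.card ≤ k}.Nonempty :=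
    ⟨Fintype.card X, fun g => ⟨Finset.univ,
      fun f₁ _ f₂ _ h₁ h₂ => funext fun x =>
        ((h₁ x (Finset.mem_univ x)).symm.trans (h₂ x (Finset.mem_univ x))), by simp⟩⟩
  have hmem : ∀ g : X → Bool, ∃ S : Finset X, IsSpecSet F g S ∧ S.card ≤ ETD F :=
    Nat.sInf_mem hKne
  have h1 : TDc F ≤ ETD F := by
    apply Finset.sup_le
    intro f hf
    obtain ⟨S, hS, hcard⟩ := hmem f
    have hts : IsTeachingSet F f S := fun g hg hag => hS g hg f hf hag (fun x _ => rfl)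
    have : TD F f ≤ S.card := Nat.sInf_le ⟨S, hts, rfl⟩
    omega
  have h2 : C0c F ≤ ETD F + 1 := by
    apply Finset.sup_le
    intro g hg
    rw [Finset.mem_filter] at hg
    obtain ⟨S, hS, hcard⟩ := hmem g
    by_cases hex : ∃ f ∈ F, AgreeOn g f S
    · obtain ⟨f, hf, haf⟩ := hex
      have hne : f ≠ g := fun h => hg.2 (h ▸ hf)
      obtain ⟨x, hx⟩ : ∃ x, f x ≠ g x := by
        by_contra h; push_neg at h; exact hne (funext h)
      have hzc : IsZeroCert F g (insert x S) := by
        intro h hh hah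
        have heq : f = h := hS f hf h hh haf
          (fun y hy => hah y (Finset.mem_insert_of_mem hy))
        have := hah x (Finset.mem_insert_self x S)
        rw [← heq] at this
        exact hx this.symm
      have hle : C0 F g ≤ (insert x S).card := Nat.sInf_le ⟨_, hzc, rfl⟩
      have := Finset.card_insert_le x S
      omega
    · push_neg at hex
      have hzc : IsZeroCert F g S := fun h hh hah => hex h hh hah
      have : C0 F g ≤ S.card := Nat.sInf_le ⟨S, hzc, rfl⟩
      omega
  refine ⟨h1, h2, ?_⟩
  apply Nat.sInf_le
  intro g
  by_cases hg : g ∈ F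
  · have hne : {n | ∃ S : Finset X, IsTeachingSet F g S ∧ S.card = n}.Nonempty :=
      ⟨(Finset.univ : Finset X).card, Finset.univ,
        fun h _ hah => funext fun x => (hah x (Finset.mem_univ x)).symm, rfl⟩
    obtain ⟨S, hS, hcard⟩ := Nat.sInf_mem hne
    refine ⟨S, fun f₁ h₁ f₂ h₂ a₁ a₂ => (hS f₁ h₁ a₁).trans (hS f₂ h₂ a₂).symm, ?_⟩
    have hTD : TD F g ≤ TDc F := Finset.le_sup hg
    have : S.card = TD F g := hcard
    omega
  · have hne : {n | ∃ S : Finset X, IsZeroCert F g S ∧ S.card = n}.Nonempty :=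
      ⟨(Finset.univ : Finset X).card, Finset.univ,
        fun h hh hah => hg (funext (fun x => hah x (Finset.mem_univ x)) ▸ hh), rfl⟩
    obtain ⟨S, hS, hcard⟩ := Nat.sInf_mem hne
    refine ⟨S, fun f₁ h₁ f₂ h₂ a₁ a₂ => absurd a₁ (hS f₁ h₁), ?_⟩
    have hC0 : C0 F g ≤ C0c F :=
      Finset.le_sup (Finset.mem_filter.mpr ⟨Finset.mem_univ g, hg⟩)
    have : S.card = C0 F g := hcard
    omega
end

section
/- The class of monotone monomials of size exactly k (for 1 ≤ k < n, n ≥ 2), viewed as a Boolean function on truth tables, is not weakly symmetric: there exist inputs x_a, x_b ∈ {0,1}^n such that no permutation π of {0,1}^n swapping x_a and x_b satisfies that f ∈ mF_k ↔ f ∘ π ∈ mF_k for all f : {0,1}^n → Bool. -/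
variable {X : Type*} [Fintype X] [DecidableEq X]

/-- f is a monotone monomial of size exactly k: conjunction of the k variables in T. -/
def MonoMonomial (n k : ℕ) (f : (Fin n → Bool) → Bool) : Prop :=
  ∃ T : Finset (Fin n), T.card = k ∧ f = fun x => decide (∀ i ∈ T, x i = true)

/-! Every monotone monomial is true on the all-ones input, and one of positive size is false on
the all-zeros input. A permutation swapping these two inputs therefore sends any monomial `f` of
size `k ≥ 1` to `f ∘ π`, which is false on the all-ones input and so is not a monomial. -/

namespace MonoMonomial

variable {n k : ℕ} {f : (Fin n → Bool) → Bool}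

theorem apply_const_true (hf : MonoMonomial n k f) : f (fun _ => true) = true := by
  obtain ⟨T, -, rfl⟩ := hf
  simp

theorem apply_const_false (hf : MonoMonomial n k f) (hk : 0 < k) :
    f (fun _ => false) = false := by
  obtain ⟨T, rfl, rfl⟩ := hf
  obtain ⟨i, hi⟩ := Finset.card_pos.mp hk
  simpa using ⟨i, hi⟩

theorem exists_of_le (hkn : k ≤ n) : ∃ f, MonoMonomial n k f := by
  obtain ⟨T, -, hT⟩ := Finset.exists_subset_card_eq (s := (Finset.univ : Finset (Fin n)))
    (by simpa using hkn)
  exact ⟨_, T, hT, rfl⟩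

end MonoMonomial

theorem monoMonomial_not_weaklySymmetric_general (n k : ℕ) (hk1 : 1 ≤ k)
    (hkn : k < n) :
    ∃ xa xb : Fin n → Bool, ∀ π : Equiv.Perm (Fin n → Bool),
      π xa = xb → π xb = xa →
      ¬ (∀ f : (Fin n → Bool) → Bool,
          MonoMonomial n k f ↔ MonoMonomial n k (f ∘ π)) := by
  refine ⟨fun _ => true, fun _ => false, fun π hswap _ hπ => ?_⟩
  obtain ⟨f, hf⟩ := MonoMonomial.exists_of_le hkn.le
  have hfπ : f (π fun _ => true) = true := ((hπ f).mp hf).apply_const_true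
  rw [hswap, hf.apply_const_false hk1] at hfπ
  exact Bool.false_ne_true hfπ

/-- the class of monotone monomials of size exactly k (1 ≤ k < n) is
not weakly symmetric: some pair of inputs cannot be swapped by any permutation of
the cube under which precomposition preserves membership in the class. -/
theorem monoMonomial_not_weaklySymmetric (n k : ℕ) (hn : 2 ≤ n) (hk1 : 1 ≤ k)
    (hkn : k < n) :
    ∃ xa xb : Fin n → Bool, ∀ π : Equiv.Perm (Fin n → Bool),
      π xa = xb → π xb = xa →
      ¬ (∀ f : (Fin n → Bool) → Bool,
          MonoMonomial n k f ↔ MonoMonomial n k (f ∘ π)) :=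
  monoMonomial_not_weaklySymmetric_general n k hk1 hkn
end
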